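/- Let K ⊆ ℝⁿ be a convex body with K ⊆ R·B_∞, and let C and G be the coordinate Hit-and-Run and Gaussian Markov schemes on K (Gaussian step variance σ², 0 < σ). Then for every measurable S ⊆ K, Φ_{C,π_K}(S, K\S) ≥ (σ√π/(R√2)) · Φ_{G,π_K}(S, K\S). -/

import Mathlib

open MeasureTheory ProbabilityTheory
open scoped ENNReal

/-- The set of parameters `t` such that `v + t eᵢ` lies in `K` (the axis-parallel chord of
`K` through `v` in direction `i`, in chord coordinates). -/
def chordSet {n : ℕ} (K : Set (Fin n → ℝ)) (v : Fin n → ℝ) (i : Fin n) : Set ℝ :=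
  {t : ℝ | v + t • (Pi.single i 1 : Fin n → ℝ) ∈ K}

/-- One step of coordinate Hit-and-Run from `v`: pick `i ∈ [n]` uniformly, then a uniform
point on the chord `K ∩ (v + ℝ eᵢ)`. -/
noncomputable def chrMeasure {n : ℕ} (K : Set (Fin n → ℝ)) (v : Fin n → ℝ) :
    Measure (Fin n → ℝ) :=
  (n : ℝ≥0∞)⁻¹ • ∑ i : Fin n, (volume (chordSet K v i))⁻¹ •
    Measure.map (fun t : ℝ => v + t • (Pi.single i 1 : Fin n → ℝ)) (volume.restrict (chordSet K v i))

/-- One step of the Gaussian walk from `v` with step variance `σ²`: pick `i ∈ [n]` uniformly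
and `κ ~ N(0,σ²)`; move to `v + κ eᵢ` if it lies in `K`, otherwise stay at `v`. -/
noncomputable def gaussStepMeasure {n : ℕ} (K : Set (Fin n → ℝ)) (σ : ℝ) (v : Fin n → ℝ) :
    Measure (Fin n → ℝ) :=
  (n : ℝ≥0∞)⁻¹ • ∑ i : Fin n,
    (Measure.map (fun t : ℝ => v + t • (Pi.single i 1 : Fin n → ℝ))
        ((gaussianReal 0 (Real.toNNReal (σ ^ 2))).restrict (chordSet K v i))
      + gaussianReal 0 (Real.toNNReal (σ ^ 2)) (chordSet K v i)ᶜ • Measure.dirac v)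

/-!
For `v ∈ S` the target `K \ S` does not contain `v`, so the rejected Gaussian steps (which stay
at `v`) never enter it, and along each axis `i` both kernels charge the same set of chord
parameters: the Gaussian walk with density at most `(σ√(2π))⁻¹`, Hit-and-Run with the uniform
density `1/|chord| ≥ 1/(2R)`. Comparing direction by direction and integrating over `S` gives the
bound, since `σ√(2π)/(2R) = σ√π/(R√2)`.
-/

open Real
open scoped NNReal

section

variable {n : ℕ}

lemma isometry_add_smul_single (v : Fin n → ℝ) (i : Fin n) :
    Isometry (fun t : ℝ => v + t • (Pi.single i 1 : Fin n → ℝ)) :=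
  Isometry.of_dist_eq fun s t => by
    rw [dist_add_left, dist_eq_norm, dist_eq_norm, ← sub_smul, norm_smul, Pi.norm_single,
      norm_one, mul_one]

lemma measurableEmbedding_add_smul_single (v : Fin n → ℝ) (i : Fin n) :
    MeasurableEmbedding (fun t : ℝ => v + t • (Pi.single i 1 : Fin n → ℝ)) :=
  (isometry_add_smul_single v i).isClosedEmbedding.measurableEmbedding

lemma preimage_subset_chordSet {K A : Set (Fin n → ℝ)} (hAK : A ⊆ K) (v : Fin n → ℝ)
    (i : Fin n) :
    (fun t : ℝ => v + t • (Pi.single i 1 : Fin n → ℝ)) ⁻¹' A ⊆ chordSet K v i :=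
  fun _ ht => hAK ht

lemma chrMeasure_apply_of_subset {K A : Set (Fin n → ℝ)} (hAK : A ⊆ K) (v : Fin n → ℝ) :
    chrMeasure K v A = (n : ℝ≥0∞)⁻¹ * ∑ i : Fin n, (volume (chordSet K v i))⁻¹ *
      volume ((fun t : ℝ => v + t • (Pi.single i 1 : Fin n → ℝ)) ⁻¹' A) := by
  simp only [chrMeasure, Measure.smul_apply, Measure.coe_finsetSum, Finset.sum_apply,
    smul_eq_mul, (measurableEmbedding_add_smul_single v _).map_apply]
  refine congrArg _ (Finset.sum_congr rfl fun i _ => ?_)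
  rw [Measure.restrict_eq_self _ (preimage_subset_chordSet hAK v i)]

lemma gaussStepMeasure_apply_of_subset {K A : Set (Fin n → ℝ)} (hAK : A ⊆ K) {v : Fin n → ℝ}
    (hvA : v ∉ A) (σ : ℝ) :
    gaussStepMeasure K σ v A = (n : ℝ≥0∞)⁻¹ * ∑ i : Fin n, gaussianReal 0 (σ ^ 2).toNNReal
      ((fun t : ℝ => v + t • (Pi.single i 1 : Fin n → ℝ)) ⁻¹' A) := by
  simp only [gaussStepMeasure, Measure.smul_apply, Measure.coe_finsetSum, Finset.sum_apply,
    Measure.add_apply, smul_eq_mul, (measurableEmbedding_add_smul_single v _).map_apply,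
    Measure.dirac_apply, Set.indicator_of_notMem hvA, mul_zero, add_zero]
  refine congrArg _ (Finset.sum_congr rfl fun i _ => ?_)
  rw [Measure.restrict_eq_self _ (preimage_subset_chordSet hAK v i)]

lemma gaussianPDF_le (μ : ℝ) (v : ℝ≥0) (x : ℝ) :
    gaussianPDF μ v x ≤ ENNReal.ofReal (√(2 * π * v))⁻¹ := by
  refine ENNReal.ofReal_le_ofReal ?_
  rw [gaussianPDFReal_def]
  refine mul_le_of_le_one_right (by positivity) (Real.exp_le_one_iff.2 ?_)
  exact div_nonpos_of_nonpos_of_nonneg (neg_nonpos.2 (sq_nonneg _)) (by positivity)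

lemma gaussianReal_le_mul_volume (μ : ℝ) {v : ℝ≥0} (hv : v ≠ 0) (s : Set ℝ) :
    gaussianReal μ v s ≤ ENNReal.ofReal (√(2 * π * v))⁻¹ * volume s := by
  rw [gaussianReal_apply μ hv, ← setLIntegral_const]
  exact lintegral_mono fun x => gaussianPDF_le μ v x

lemma volume_chordSet_le {K : Set (Fin n → ℝ)} {R : ℝ} (hKR : K ⊆ Metric.closedBall 0 R)
    (v : Fin n → ℝ) (i : Fin n) : volume (chordSet K v i) ≤ ENNReal.ofReal (2 * R) := by
  have hsub : chordSet K v i ⊆ Set.Icc (-R - v i) (R - v i) := by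
    intro t ht
    have hcoord : |v i + t| ≤ R := by
      simpa using (norm_le_pi_norm _ i).trans (mem_closedBall_zero_iff.1 (hKR ht))
    constructor <;> linarith [abs_le.1 hcoord]
  calc volume (chordSet K v i) ≤ volume (Set.Icc (-R - v i) (R - v i)) := measure_mono hsub
    _ = ENNReal.ofReal (2 * R) := by rw [Real.volume_Icc]; ring_nf

lemma flow_constant_mul_gaussian_peak {σ R : ℝ} (hσ : 0 < σ) (hR : 0 < R) :
    σ * √π / (R * √2) * (√(2 * π * σ ^ 2))⁻¹ = (2 * R)⁻¹ := by
  have hsqrt : √(2 * π * σ ^ 2) = √2 * √π * σ := by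
    rw [Real.sqrt_mul (by positivity), Real.sqrt_mul (by norm_num), Real.sqrt_sq hσ.le]
  have hπ : 0 < √π := Real.sqrt_pos.2 Real.pi_pos
  have h2 : 0 < √2 := Real.sqrt_pos.2 two_pos
  rw [hsqrt]
  field_simp
  rw [Real.sq_sqrt zero_le_two]

lemma gaussStepMeasure_le_chrMeasure {K A : Set (Fin n → ℝ)} {R σ : ℝ} (hR : 0 < R)
    (hKR : K ⊆ Metric.closedBall 0 R) (hσ : 0 < σ) (hAK : A ⊆ K) {v : Fin n → ℝ}
    (hvA : v ∉ A) :
    ENNReal.ofReal (σ * √π / (R * √2)) * gaussStepMeasure K σ v A ≤ chrMeasure K v A := by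
  have hvar : (σ ^ 2).toNNReal ≠ 0 := by simpa using hσ.ne'
  rw [gaussStepMeasure_apply_of_subset hAK hvA, chrMeasure_apply_of_subset hAK, mul_left_comm,
    Finset.mul_sum]
  refine mul_le_mul_right (Finset.sum_le_sum fun i _ => ?_) _
  set T := (fun t : ℝ => v + t • (Pi.single i 1 : Fin n → ℝ)) ⁻¹' A
  calc ENNReal.ofReal (σ * √π / (R * √2)) * gaussianReal 0 (σ ^ 2).toNNReal T
      ≤ ENNReal.ofReal (σ * √π / (R * √2)) *
          (ENNReal.ofReal (√(2 * π * σ ^ 2))⁻¹ * volume T) := by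
        gcongr
        simpa [Real.coe_toNNReal _ (sq_nonneg σ)] using gaussianReal_le_mul_volume 0 hvar T
    _ = (ENNReal.ofReal (2 * R))⁻¹ * volume T := by
        rw [← mul_assoc, ← ENNReal.ofReal_mul (by positivity),
          flow_constant_mul_gaussian_peak hσ hR, ENNReal.ofReal_inv_of_pos (by positivity)]
    _ ≤ (volume (chordSet K v i))⁻¹ * volume T := by
        gcongr
        exact volume_chordSet_le hKR v i

end

theorem chr_flow_ge_gaussian_flow_general (n : ℕ) (K : Set (Fin n → ℝ))
    (R : ℝ) (hR : 1 ≤ R) (hKR : K ⊆ Metric.closedBall 0 R)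
    (σ : ℝ) (hσ : 0 < σ)
    (S : Set (Fin n → ℝ)) (hS : MeasurableSet S) :
    ENNReal.ofReal (σ * Real.sqrt Real.pi / (R * Real.sqrt 2)) *
        ∫⁻ v in S, gaussStepMeasure K σ v (K \ S) ∂((volume K)⁻¹ • volume.restrict K)
      ≤ ∫⁻ v in S, chrMeasure K v (K \ S) ∂((volume K)⁻¹ • volume.restrict K) := by
  rw [← lintegral_const_mul' _ _ ENNReal.ofReal_ne_top]
  refine setLIntegral_mono' hS fun v hv => ?_
  exact gaussStepMeasure_le_chrMeasure (zero_lt_one.trans_le hR) hKR hσ Set.sdiff_subset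
    fun hvA => hvA.2 hv

/-- If the convex body `K` satisfies `K ⊆ R·B_∞`, then for every measurable
`S ⊆ K` the ergodic flow (w.r.t. the uniform distribution `π_K`) of coordinate Hit-and-Run
from `S` to `K \ S` is at least `σ√π/(R√2)` times that of the Gaussian walk. -/
theorem chr_flow_ge_gaussian_flow (n : ℕ) (K : Set (Fin n → ℝ))
    (hKconv : Convex ℝ K) (hKmeas : MeasurableSet K)
    (R : ℝ) (hR : 1 ≤ R) (hKR : K ⊆ Metric.closedBall 0 R)
    (σ : ℝ) (hσ : 0 < σ)
    (S : Set (Fin n → ℝ)) (hS : MeasurableSet S) (hSK : S ⊆ K) :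
    ENNReal.ofReal (σ * Real.sqrt Real.pi / (R * Real.sqrt 2)) *
        ∫⁻ v in S, gaussStepMeasure K σ v (K \ S) ∂((volume K)⁻¹ • volume.restrict K)
      ≤ ∫⁻ v in S, chrMeasure K v (K \ S) ∂((volume K)⁻¹ • volume.restrict K) :=
  chr_flow_ge_gaussian_flow_general n K R hR hKR σ hσ S hS
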